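/- arXiv:2201.00602 — 2 statements merged into one kernel-verified Lean document; each statement's English description precedes it below -/
import Mathlib

section
/- Let $q \geq 2$ be an integer and define $H_m$ recursively by $H_1 = \mathbb{N}$ and $H_m = \{qh : h \in H_{m-1}\} \cup \{n : n \geq c_m\}$ with $c_m = q^m - q^{\lceil m/2 \rceil}$. Then for all $m \geq 1$, the number of gaps $|\mathbb{N} \setminus H_m|$ equals $(q^{\lceil m/2 \rceil} - 1)(q^{\lfloor m/2 \rfloor} - 1)$. -/
set_option maxHeartbeats 1000000

/-- conductor `c_m = q^m - q^(⌈m/2⌉)`, where `⌈m/2⌉ = (m+1)/2` in `ℕ`. -/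
def cm (q m : ℕ) : ℕ := q ^ m - q ^ ((m + 1) / 2)

/-- The recursively defined Weierstrass semigroups of the Garcia–Stichtenoth tower. -/
def Hm (q : ℕ) : ℕ → Set ℕ
  | 0 => Set.univ
  | 1 => Set.univ
  | m + 2 => (fun h => q * h) '' (Hm q (m + 1)) ∪ {n | cm q (m + 2) ≤ n}

lemma gap_lt {q m n : ℕ} (h : n ∉ Hm q m) : n < cm q m := by
  match m with
  | 0 => exact absurd (Set.mem_univ n) h
  | 1 => exact absurd (Set.mem_univ n) h
  | k + 2 =>
    by_contra hlt
    exact h (Set.mem_union_right _ (le_of_not_gt hlt))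

lemma ncard_Iio_nat (c : ℕ) : (Set.Iio c).ncard = c := by
  rw [← Finset.coe_Iio, Set.ncard_coe_finset, Nat.card_Iio]

theorem stmt_11 (q : ℕ) (hq : 2 ≤ q) (m : ℕ) (hm : 1 ≤ m) :
    Nat.card ((Hm q m)ᶜ : Set ℕ) = (q ^ ((m + 1) / 2) - 1) * (q ^ (m / 2) - 1) := by
  induction m, hm using Nat.le_induction with
  | base =>
    rw [show Hm q 1 = Set.univ from rfl]
    simp
  | succ m hm ih =>
    obtain ⟨k, rfl⟩ : ∃ k, m = k + 1 := ⟨m - 1, by omega⟩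
    have hq0 : 0 < q := by omega
    rw [show k + 1 + 1 = k + 2 from rfl]
    set H : Set ℕ := Hm q (k + 1) with hH
    set c : ℕ := cm q (k + 2) with hc0
    set d : ℕ := q ^ (k + 1) - q ^ ((k + 1) / 2) with hd
    have h1 : q ^ ((k + 3) / 2) ≤ q ^ (k + 2) := Nat.pow_le_pow_right hq0 (by omega)
    have h2 : q ^ ((k + 1) / 2) ≤ q ^ (k + 1) := Nat.pow_le_pow_right hq0 (by omega)
    have hc : c = q * d := by
      rw [hc0, hd]
      simp only [cm]
      zify [h1, h2]
      rw [show (k + 2 + 1) / 2 = (k + 1) / 2 + 1 by omega]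
      push_cast [pow_succ]
      ring
    have hdd : cm q (k + 1) ≤ d := by
      rw [hd]
      simp only [cm]
      exact Nat.sub_le_sub_left (Nat.pow_le_pow_right hq0 (by omega)) _
    have hgapsub : Hᶜ ⊆ Set.Iio d :=
      fun n hn => lt_of_lt_of_le (gap_lt hn) hdd
    have hfinH : Hᶜ.Finite := (Set.finite_Iio d).subset hgapsub
    have key1 : (Hm q (k + 2))ᶜ = Set.Iio c \ ((fun h => q * h) '' H) := by
      rw [show Hm q (k + 2) = (fun h => q * h) '' H ∪ {n | c ≤ n} from rfl,
        Set.compl_union]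
      ext n
      simp only [Set.mem_inter_iff, Set.mem_compl_iff, Set.mem_setOf_eq, not_le,
        Set.mem_diff, Set.mem_Iio]
      tauto
    have key2 : Set.Iio c ∩ ((fun h => q * h) '' H) = (fun h => q * h) '' (Set.Iio d ∩ H) := by
      ext n
      simp only [Set.mem_inter_iff, Set.mem_image, Set.mem_Iio]
      constructor
      · rintro ⟨hlt, h, hh, rfl⟩
        rw [hc] at hlt
        exact ⟨h, ⟨Nat.lt_of_mul_lt_mul_left hlt, hh⟩, rfl⟩
      · rintro ⟨h, ⟨hhd, hh⟩, rfl⟩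
        refine ⟨?_, h, hh, rfl⟩
        rw [hc]
        exact mul_lt_mul_of_pos_left hhd hq0
    have hinj : Function.Injective (fun h : ℕ => q * h) :=
      fun a b hab => by
        simp only at hab
        exact Nat.eq_of_mul_eq_mul_left hq0 hab
    have count : Nat.card ((Hm q (k + 2))ᶜ : Set ℕ)
        = c - (d - Nat.card (Hᶜ : Set ℕ)) := by
      rw [Nat.card_coe_set_eq, Nat.card_coe_set_eq, key1,
        ← Set.diff_self_inter, Set.ncard_diff Set.inter_subset_left
          ((Set.finite_Iio c).inter_of_left _),
        key2, Set.ncard_image_of_injective _ hinj,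
        ← Set.diff_compl, Set.ncard_diff hgapsub hfinH,
        ncard_Iio_nat, ncard_Iio_nat]
    rw [count, ih, hc0, hd]
    simp only [cm]
    rcases Nat.even_or_odd k with ⟨j, hj⟩ | ⟨j, hj⟩
    · -- k = j + j, m + 1 = 2j + 2
      subst hj
      rw [show (j + j + 2 + 1) / 2 = j + 1 by omega,
        show (j + j + 1) / 2 = j by omega,
        show (j + j + 1 + 1) / 2 = j + 1 by omega]
      have hA : q ^ (j + 1) ≤ q ^ (j + j + 2) := Nat.pow_le_pow_right hq0 (by omega)
      have hB : q ^ j ≤ q ^ (j + j + 1) := Nat.pow_le_pow_right hq0 (by omega)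
      have hx : 1 ≤ q ^ j := Nat.one_le_pow _ _ hq0
      have hy : 1 ≤ q ^ (j + 1) := Nat.one_le_pow _ _ hq0
      have hG : (q ^ (j + 1) - 1) * (q ^ j - 1) ≤ q ^ (j + j + 1) - q ^ j := by
        zify [hx, hy, hB]
        nlinarith [pow_pos (show (0:ℤ) < q by exact_mod_cast hq0) j,
          (by push_cast; ring : ((q:ℤ)) ^ (j + j + 1) = (q:ℤ) ^ (j + 1) * (q:ℤ) ^ j),
          (show (1:ℤ) ≤ (q:ℤ) ^ (j + 1) by exact_mod_cast hy),
          (show (1:ℤ) ≤ (q:ℤ) ^ j by exact_mod_cast hx)]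
      have hDC : q ^ (j + j + 1) - q ^ j - (q ^ (j + 1) - 1) * (q ^ j - 1)
          ≤ q ^ (j + j + 2) - q ^ (j + 1) := by
        refine le_trans (Nat.sub_le _ _) ?_
        zify [hA, hB]
        nlinarith [(by push_cast; ring : ((q:ℤ)) ^ (j + j + 2) = (q:ℤ) * (q:ℤ) ^ (j + j + 1)),
          (by push_cast; ring : ((q:ℤ)) ^ (j + 1) = (q:ℤ) * (q:ℤ) ^ j),
          (show (q:ℤ) ^ j ≤ (q:ℤ) ^ (j + j + 1) by exact_mod_cast hB),
          (show (2:ℤ) ≤ (q:ℤ) by exact_mod_cast hq)]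
      zify [hA, hB, hx, hy, hG, hDC]
      ring
    · -- k = 2j + 1, m + 1 = 2j + 3
      rw [show 2 * j + 1 = j + j + 1 by ring] at hj
      subst hj
      simp only [show j + j + 1 + 2 = j + j + 3 by omega,
        show j + j + 1 + 1 = j + j + 2 by omega]
      rw [show (j + j + 3 + 1) / 2 = j + 2 by omega,
        show (j + j + 2) / 2 = j + 1 by omega,
        show (j + j + 2 + 1) / 2 = j + 1 by omega]
      have hA : q ^ (j + 2) ≤ q ^ (j + j + 3) := Nat.pow_le_pow_right hq0 (by omega)
      have hB : q ^ (j + 1) ≤ q ^ (j + j + 2) := Nat.pow_le_pow_right hq0 (by omega)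
      have hy : 1 ≤ q ^ (j + 1) := Nat.one_le_pow _ _ hq0
      have hz : 1 ≤ q ^ (j + 2) := Nat.one_le_pow _ _ hq0
      have hG : (q ^ (j + 1) - 1) * (q ^ (j + 1) - 1) ≤ q ^ (j + j + 2) - q ^ (j + 1) := by
        zify [hy, hB]
        nlinarith [(by push_cast; ring : ((q:ℤ)) ^ (j + j + 2) = (q:ℤ) ^ (j + 1) * (q:ℤ) ^ (j + 1)),
          (show (1:ℤ) ≤ (q:ℤ) ^ (j + 1) by exact_mod_cast hy)]
      have hDC : q ^ (j + j + 2) - q ^ (j + 1) - (q ^ (j + 1) - 1) * (q ^ (j + 1) - 1)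
          ≤ q ^ (j + j + 3) - q ^ (j + 2) := by
        refine le_trans (Nat.sub_le _ _) ?_
        zify [hA, hB]
        nlinarith [(by push_cast; ring : ((q:ℤ)) ^ (j + j + 3) = (q:ℤ) * (q:ℤ) ^ (j + j + 2)),
          (by push_cast; ring : ((q:ℤ)) ^ (j + 2) = (q:ℤ) * (q:ℤ) ^ (j + 1)),
          (show (q:ℤ) ^ (j + 1) ≤ (q:ℤ) ^ (j + j + 2) by exact_mod_cast hB),
          (show (2:ℤ) ≤ (q:ℤ) by exact_mod_cast hq)]
      zify [hA, hB, hy, hz, hG, hDC]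
      ring
end

section
/- Let $q > 2$ be a prime power. For every $\ell \geq 1$ there exist at least $(q-1)^{\ell-1}$ points in $\mathbb{P}^\ell(\mathbb{F}_q)$ (projective $\ell$-space over $\mathbb{F}_q$) satisfying the homogeneous equations $x_{i+1}^{q-1} = -z^{q-1} + (x_i + z)^{q-1}$ for $i = 1, \ldots, \ell-1$, where the coordinates are $[x_1 : \cdots : x_\ell : z]$. -/
theorem stmt_17 (q ℓ : ℕ) (hq : 2 < q) (hℓ : 1 ≤ ℓ) (F : Type*) [Field F] [Fintype F]
    (hF : Fintype.card F = q) :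
    (q - 1) ^ (ℓ - 1) ≤
      Nat.card {P : Projectivization F (Fin (ℓ + 1) → F) //
        ∀ i : ℕ, ∀ h : i + 1 < ℓ,
          (P.rep ⟨i + 1, by omega⟩) ^ (q - 1) =
            -(P.rep ⟨ℓ, by omega⟩) ^ (q - 1) +
              (P.rep ⟨i, by omega⟩ + P.rep ⟨ℓ, by omega⟩) ^ (q - 1)} := by
  classical
  -- the vector [1, x₂, …, x_ℓ, 0]
  set v : (Fin (ℓ - 1) → Fˣ) → Fin (ℓ + 1) → F := fun u j =>
    if h : 0 < (j : ℕ) ∧ (j : ℕ) < ℓ then (u ⟨(j : ℕ) - 1, by omega⟩ : F)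
    else if (j : ℕ) = 0 then 1 else 0 with hv
  have hv0 : ∀ u, v u ⟨0, by omega⟩ = 1 := by
    intro u; simp [hv]
  have hvl : ∀ u, v u ⟨ℓ, by omega⟩ = 0 := by
    intro u
    simp only [hv]
    rw [dif_neg (by omega), if_neg (by omega)]
  have hvne : ∀ u (j : Fin (ℓ + 1)), (j : ℕ) < ℓ → v u j ≠ 0 := by
    intro u j hj
    simp only [hv]
    by_cases h : 0 < (j : ℕ) ∧ (j : ℕ) < ℓ
    · rw [dif_pos h]; exact Units.ne_zero _
    · rw [dif_neg h, if_pos (by omega)]; exact one_ne_zero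
  have hvnz : ∀ u, v u ≠ 0 := by
    intro u h
    exact hvne u ⟨0, by omega⟩ (by show 0 < ℓ; omega) (by rw [h]; rfl)
  have hpow : ∀ a : F, a ≠ 0 → a ^ (q - 1) = 1 := by
    intro a ha
    rw [← hF]
    exact FiniteField.pow_card_sub_one_eq_one a ha
  have key : ∀ u : Fin (ℓ - 1) → Fˣ,
      ∀ i : ℕ, ∀ h : i + 1 < ℓ,
        ((Projectivization.mk F (v u) (hvnz u)).rep ⟨i + 1, by omega⟩) ^ (q - 1) =
          -((Projectivization.mk F (v u) (hvnz u)).rep ⟨ℓ, by omega⟩) ^ (q - 1) +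
            ((Projectivization.mk F (v u) (hvnz u)).rep ⟨i, by omega⟩ +
              (Projectivization.mk F (v u) (hvnz u)).rep ⟨ℓ, by omega⟩) ^ (q - 1) := by
    intro u i hi
    set P := Projectivization.mk F (v u) (hvnz u) with hP
    obtain ⟨c, hc⟩ : ∃ c : Fˣ, c • v u = P.rep :=
      (Projectivization.mk_eq_mk_iff F _ _ P.rep_nonzero (hvnz u)).mp (P.mk_rep)
    have hrep : ∀ j, P.rep j = (c : F) * v u j := by
      intro j; rw [← hc]; rfl
    have hl : P.rep ⟨ℓ, by omega⟩ = 0 := by rw [hrep, hvl, mul_zero]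
    rw [hl, hrep, hrep, add_zero, mul_pow, mul_pow,
      hpow _ (hvne u ⟨i + 1, by omega⟩ (by simpa using hi)),
      hpow _ (hvne u ⟨i, by omega⟩ (by simp; omega)),
      zero_pow (by omega), neg_zero, zero_add]
  let f : (Fin (ℓ - 1) → Fˣ) → {P : Projectivization F (Fin (ℓ + 1) → F) //
      ∀ i : ℕ, ∀ h : i + 1 < ℓ,
        (P.rep ⟨i + 1, by omega⟩) ^ (q - 1) =
          -(P.rep ⟨ℓ, by omega⟩) ^ (q - 1) +
            (P.rep ⟨i, by omega⟩ + P.rep ⟨ℓ, by omega⟩) ^ (q - 1)} :=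
    fun u => ⟨Projectivization.mk F (v u) (hvnz u), key u⟩
  have hf : Function.Injective f := by
    intro u u' huu
    have h1 : Projectivization.mk F (v u) (hvnz u) = Projectivization.mk F (v u') (hvnz u') :=
      congrArg Subtype.val huu
    obtain ⟨c, hc⟩ := (Projectivization.mk_eq_mk_iff F _ _ (hvnz u) (hvnz u')).mp h1
    have hc' : ∀ j, (c : F) * v u' j = v u j := by
      intro j; rw [← hc]; rfl
    have hc1 : (c : F) = 1 := by
      have := hc' ⟨0, by omega⟩
      rwa [hv0, hv0, mul_one] at this
    funext i
    have hcoord := hc' ⟨(i : ℕ) + 1, by omega⟩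
    rw [hc1, one_mul] at hcoord
    simp only [hv] at hcoord
    rw [dif_pos (by simp; omega), dif_pos (by simp; omega)] at hcoord
    have : u' ⟨(i : ℕ), by omega⟩ = u ⟨(i : ℕ), by omega⟩ := Units.ext hcoord
    symm
    exact this
  have hfin : Finite (Projectivization F (Fin (ℓ + 1) → F)) := Quotient.finite _
  calc (q - 1) ^ (ℓ - 1) = Nat.card (Fin (ℓ - 1) → Fˣ) := by
        rw [Nat.card_eq_fintype_card, Fintype.card_fun, Fintype.card_units, hF,
          Fintype.card_fin]
    _ ≤ _ := Nat.card_le_card_of_injective f hf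
end
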